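/- arXiv:2303.15640 — 7 statements merged into one kernel-verified Lean document; each statement's English description precedes it below -/
import Mathlib

section
/- If an operation 𝓘 measures a sharp effect a (a projection), then 𝓘*(b) commutes with a for every effect b. -/
/-!
If `∑ Kᵢᴴ Kᵢ = a` with `a` idempotent, then `a` is self-adjoint and
`∑ (Kᵢ (1 - a))ᴴ (Kᵢ (1 - a)) = (1 - a) a (1 - a) = 0`; taking traces, a vanishing sum
of such positive terms has vanishing summands, so `Kᵢ a = Kᵢ` for all `i`. Hence
`a 𝓘*(b) = 𝓘*(b) = 𝓘*(b) a` for every `b`.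
-/

open scoped ComplexOrder

open Matrix BigOperators

/-- An effect on a finite-dimensional Hilbert space: `0 ≤ a ≤ I`. -/
def IsEffect {n : ℕ} (a : Matrix (Fin n) (Fin n) ℂ) : Prop :=
  a.PosSemidef ∧ (1 - a).PosSemidef

/-- The dual of the operation with Kraus operators `K i`. -/
noncomputable def KrausDual {n m : ℕ} (K : Fin m → Matrix (Fin n) (Fin n) ℂ)
    (A : Matrix (Fin n) (Fin n) ℂ) : Matrix (Fin n) (Fin n) ℂ :=
  ∑ i, (K i)ᴴ * A * K i

namespace Matrix

variable {ι m n R : Type*} [Fintype m] [Fintype n] [CommRing R] [PartialOrder R] [StarRing R]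
    [StarOrderedRing R] [NoZeroDivisors R]

theorem sum_conjTranspose_mul_self_eq_zero_iff {s : Finset ι} {A : ι → Matrix m n R} :
    ∑ i ∈ s, (A i)ᴴ * A i = 0 ↔ ∀ i ∈ s, A i = 0 := by
  refine ⟨fun h => ?_, fun h => Finset.sum_eq_zero fun i hi => by simp [h i hi]⟩
  have htrace : ∑ i ∈ s, ((A i)ᴴ * A i).trace = 0 := by rw [← trace_sum, h, trace_zero]
  rw [Finset.sum_eq_zero_iff_of_nonneg fun i _ =>
    (posSemidef_conjTranspose_mul_self _).trace_nonneg] at htrace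
  exact fun i hi => trace_conjTranspose_mul_self_eq_zero_iff.mp (htrace i hi)

theorem mul_eq_self_of_sum_conjTranspose_mul_self_eq [DecidableEq n] {s : Finset ι}
    {K : ι → Matrix m n R} {p : Matrix n n R} (hsum : ∑ i ∈ s, (K i)ᴴ * K i = p)
    (hp : IsIdempotentElem p) {i : ι} (hi : i ∈ s) : K i * p = K i := by
  have hpH : pᴴ = p := by simp [← hsum, conjTranspose_sum]
  have hzero : ∑ j ∈ s, (K j * (1 - p))ᴴ * (K j * (1 - p)) = 0 :=
    calc ∑ j ∈ s, (K j * (1 - p))ᴴ * (K j * (1 - p))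
        = (1 - p) * (∑ j ∈ s, (K j)ᴴ * K j) * (1 - p) := by
          simp only [Finset.mul_sum, Finset.sum_mul, conjTranspose_mul, conjTranspose_sub,
            conjTranspose_one, hpH, Matrix.mul_assoc]
      _ = 0 := by rw [hsum, hp.one_sub_mul_self, zero_mul]
  have hKi : K i * (1 - p) = 0 := sum_conjTranspose_mul_self_eq_zero_iff.mp hzero i hi
  rwa [Matrix.mul_sub, Matrix.mul_one, sub_eq_zero, eq_comm] at hKi

end Matrix

section KrausDual

variable {n m : ℕ} {K : Fin m → Matrix (Fin n) (Fin n) ℂ} {a : Matrix (Fin n) (Fin n) ℂ}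

theorem krausDual_mul_eq_self (hmeas : KrausDual K 1 = a) (hsharp : IsIdempotentElem a)
    (b : Matrix (Fin n) (Fin n) ℂ) : KrausDual K b * a = KrausDual K b := by
  have hsum : ∑ i, (K i)ᴴ * K i = a := by simpa [KrausDual] using hmeas
  simp only [KrausDual, Finset.sum_mul, mul_assoc,
    mul_eq_self_of_sum_conjTranspose_mul_self_eq hsum hsharp (Finset.mem_univ _)]

theorem mul_krausDual_eq_self (hmeas : KrausDual K 1 = a) (hsharp : IsIdempotentElem a)
    (b : Matrix (Fin n) (Fin n) ℂ) : a * KrausDual K b = KrausDual K b := by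
  have haH : aᴴ = a := by simp [← hmeas, KrausDual, conjTranspose_sum]
  have hdual : (KrausDual K b)ᴴ = KrausDual K bᴴ := by
    simp [KrausDual, conjTranspose_sum, mul_assoc]
  rw [← conjTranspose_inj, conjTranspose_mul, haH, hdual, krausDual_mul_eq_self hmeas hsharp]

end KrausDual

theorem dual_commutes_of_measures_sharp_general {n m : ℕ}
    (K : Fin m → Matrix (Fin n) (Fin n) ℂ)
    (a : Matrix (Fin n) (Fin n) ℂ) (hsharp : a * a = a)
    (hmeas : KrausDual K 1 = a) :
    ∀ b : Matrix (Fin n) (Fin n) ℂ, IsEffect b →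
      KrausDual K b * a = a * KrausDual K b := by
  intro b _
  rw [krausDual_mul_eq_self hmeas hsharp, mul_krausDual_eq_self hmeas hsharp]

/-- if an operation (Kraus operators `K`, `∑ Kᵢ*Kᵢ ≤ I`) measures a
sharp effect `a` (a projection), then `𝓘*(b)` commutes with `a` for every effect `b`. -/
theorem dual_commutes_of_measures_sharp {n m : ℕ}
    (K : Fin m → Matrix (Fin n) (Fin n) ℂ)
    (hK : (1 - ∑ i, (K i)ᴴ * K i).PosSemidef)
    (a : Matrix (Fin n) (Fin n) ℂ) (ha : IsEffect a) (hsharp : a * a = a)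
    (hmeas : KrausDual K 1 = a) :
    ∀ b : Matrix (Fin n) (Fin n) ℂ, IsEffect b →
      KrausDual K b * a = a * KrausDual K b :=
  dual_commutes_of_measures_sharp_general K a hsharp hmeas
end

section
/- If an operation 𝓘 measures an atomic effect a (a rank-one projection), then for every effect b there exists λ ∈ [0,1] with 𝓘*(b) = λ·a. -/
/-!
With `c = 𝓘*(b)`, positivity of `𝓘*` gives `0 ≤ c ≤ 𝓘*(I) = a`. A positive `c` dominated by
`a` vanishes on `ker a`, so `c = c a = a c`; a matrix that factors through the one-dimensional
range of `a` on both sides is a scalar multiple `μ a`, and evaluating `0 ≤ μ a ≤ a` on a vector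
of that range gives `0 ≤ μ ≤ 1`.
-/

open scoped ComplexOrder

open Matrix BigOperators

/-- An atomic effect: a rank-one (orthogonal) projection. -/
def IsAtomicEffect {n : ℕ} (a : Matrix (Fin n) (Fin n) ℂ) : Prop :=
  a.IsHermitian ∧ a * a = a ∧ a.rank = 1

namespace Matrix

variable {ι : Type*} [Fintype ι]

theorem mul_eq_self_of_ker_le {R : Type*} [Ring R] {P B : Matrix ι ι R}
    (hP : IsIdempotentElem P) (hker : ∀ x, P *ᵥ x = 0 → B *ᵥ x = 0) : B * P = B := by
  refine ext_iff_mulVec.mpr fun x => ?_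
  have hx : P *ᵥ (x - P *ᵥ x) = 0 := by rw [mulVec_sub, mulVec_mulVec, hP.eq, sub_self]
  have hBx := hker _ hx
  rw [mulVec_sub, sub_eq_zero] at hBx
  rw [← mulVec_mulVec, hBx]

theorem exists_smul_eq_of_rank_eq_one {K : Type*} [Field K] {P M : Matrix ι ι K}
    (hP : P.rank = 1) (hPM : P * M = M) (hMP : M * P = M) : ∃ μ : K, M = μ • P := by
  obtain ⟨u, -, hspan⟩ :=
    finrank_eq_one_iff'.mp (hP : Module.finrank K (LinearMap.range P.mulVecLin) = 1)
  have hrange : ∀ x, ∃ t : K, t • (u : ι → K) = P *ᵥ x := fun x => by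
    obtain ⟨t, ht⟩ := hspan ⟨P *ᵥ x, x, rfl⟩
    exact ⟨t, congrArg Subtype.val ht⟩
  obtain ⟨μ, hμ⟩ := hrange (M *ᵥ (u : ι → K))
  rw [mulVec_mulVec, hPM] at hμ
  refine ⟨μ, ext_iff_mulVec.mpr fun x => ?_⟩
  obtain ⟨t, ht⟩ := hrange x
  calc M *ᵥ x = M *ᵥ (P *ᵥ x) := by rw [mulVec_mulVec, hMP]
    _ = t • μ • (u : ι → K) := by rw [← ht, mulVec_smul, hμ]
    _ = (μ • P) *ᵥ x := by rw [smul_mulVec, ← ht, smul_comm]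

variable {𝕜 : Type*} [RCLike 𝕜]

theorem PosSemidef.mulVec_eq_zero_of_posSemidef_sub {A B : Matrix ι ι 𝕜} (hB : B.PosSemidef)
    (hAB : (A - B).PosSemidef) {x : ι → 𝕜} (hx : A *ᵥ x = 0) : B *ᵥ x = 0 := by
  have hle := hAB.dotProduct_mulVec_nonneg x
  rw [sub_mulVec, hx, dotProduct_sub, dotProduct_zero, zero_sub, neg_nonneg] at hle
  exact (hB.dotProduct_mulVec_zero_iff x).mp (le_antisymm hle (hB.dotProduct_mulVec_nonneg x))

theorem PosSemidef.mul_eq_self_of_posSemidef_sub {P B : Matrix ι ι 𝕜} (hB : B.PosSemidef)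
    (hPB : (P - B).PosSemidef) (hP : IsIdempotentElem P) : B * P = B :=
  mul_eq_self_of_ker_le hP fun _ => hB.mulVec_eq_zero_of_posSemidef_sub hPB

theorem mem_Icc_of_posSemidef_smul {P : Matrix ι ι 𝕜} {μ : 𝕜} (hP : IsIdempotentElem P)
    (hP0 : P ≠ 0) (hμP : (μ • P).PosSemidef) (hPμP : (P - μ • P).PosSemidef) :
    μ ∈ Set.Icc 0 1 := by
  obtain ⟨x, hx⟩ : ∃ x, P *ᵥ x ≠ 0 := by
    by_contra! h
    exact hP0 (ext_iff_mulVec.mpr fun x => by rw [h x, zero_mulVec])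
  set u := P *ᵥ x
  have hPu : P *ᵥ u = u := by rw [mulVec_mulVec, hP.eq]
  have hu : 0 < star u ⬝ᵥ u := dotProduct_star_self_pos_iff.mpr hx
  have h0 := hμP.dotProduct_mulVec_nonneg u
  have h1 := hPμP.dotProduct_mulVec_nonneg u
  rw [smul_mulVec, hPu, dotProduct_smul, smul_eq_mul] at h0
  rw [sub_mulVec, smul_mulVec, hPu, dotProduct_sub, dotProduct_smul, smul_eq_mul, sub_nonneg] at h1
  exact ⟨le_of_mul_le_mul_right (by rwa [zero_mul]) hu, (mul_le_iff_le_one_left hu).mp h1⟩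

end Matrix

theorem Complex.exists_ofReal_eq_of_mem_Icc {z : ℂ} (hz : z ∈ Set.Icc 0 1) :
    ∃ r : ℝ, r ∈ Set.Icc 0 1 ∧ z = r := by
  obtain ⟨h0, h1⟩ := hz
  refine ⟨z.re, ⟨(nonneg_iff.mp h0).1, by simpa using (le_def.mp h1).1⟩, ?_⟩
  exact eq_re_of_ofReal_le (r := 0) (by simpa using h0)

theorem krausDual_posSemidef {n m : ℕ} (K : Fin m → Matrix (Fin n) (Fin n) ℂ)
    {b : Matrix (Fin n) (Fin n) ℂ} (hb : b.PosSemidef) : (KrausDual K b).PosSemidef :=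
  Finset.sum_induction _ _ (fun _ _ hx hy => hx.add hy) PosSemidef.zero
    fun _ _ => hb.conjTranspose_mul_mul_same _

theorem krausDual_sub {n m : ℕ} (K : Fin m → Matrix (Fin n) (Fin n) ℂ)
    (x y : Matrix (Fin n) (Fin n) ℂ) : KrausDual K (x - y) = KrausDual K x - KrausDual K y := by
  simp only [KrausDual, mul_sub, sub_mul, Finset.sum_sub_distrib]

theorem dual_eq_smul_of_measures_atomic_general {n m : ℕ}
    (K : Fin m → Matrix (Fin n) (Fin n) ℂ)
    (a : Matrix (Fin n) (Fin n) ℂ) (hatom : IsAtomicEffect a)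
    (hmeas : KrausDual K 1 = a) :
    ∀ b : Matrix (Fin n) (Fin n) ℂ, IsEffect b →
      ∃ lam : ℝ, lam ∈ Set.Icc (0 : ℝ) 1 ∧ KrausDual K b = (lam : ℂ) • a := by
  intro b hb
  obtain ⟨hherm, hidem, hrank⟩ := hatom
  have hc : (KrausDual K b).PosSemidef := krausDual_posSemidef K hb.1
  have hle : (a - KrausDual K b).PosSemidef := by
    simpa only [krausDual_sub, hmeas] using krausDual_posSemidef K hb.2
  have hca : KrausDual K b * a = KrausDual K b := hc.mul_eq_self_of_posSemidef_sub hle hidem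
  have hac : a * KrausDual K b = KrausDual K b := by
    simpa only [conjTranspose_mul, hherm.eq, hc.1.eq] using congrArg conjTranspose hca
  obtain ⟨μ, hμ⟩ := exists_smul_eq_of_rank_eq_one hrank hac hca
  have ha0 : a ≠ 0 := by
    rintro rfl
    simp at hrank
  obtain ⟨lam, hlam, rfl⟩ := Complex.exists_ofReal_eq_of_mem_Icc <|
    mem_Icc_of_posSemidef_smul hidem ha0 (hμ ▸ hc) (hμ ▸ hle)
  exact ⟨lam, hlam, hμ⟩

/-- if an operation (Kraus operators `K`, `∑ Kᵢ*Kᵢ ≤ I`) measures an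
atomic effect `a`, then for every effect `b` there is `λ ∈ [0,1]` with `𝓘*(b) = λ a`. -/
theorem dual_eq_smul_of_measures_atomic {n m : ℕ}
    (K : Fin m → Matrix (Fin n) (Fin n) ℂ)
    (hK : (1 - ∑ i, (K i)ᴴ * K i).PosSemidef)
    (a : Matrix (Fin n) (Fin n) ℂ) (ha : IsEffect a) (hatom : IsAtomicEffect a)
    (hmeas : KrausDual K 1 = a) :
    ∀ b : Matrix (Fin n) (Fin n) ℂ, IsEffect b →
      ∃ lam : ℝ, lam ∈ Set.Icc (0 : ℝ) 1 ∧ KrausDual K b = (lam : ℂ) • a :=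
  dual_eq_smul_of_measures_atomic_general K a hatom hmeas
end

section
/- For effects a, b on a finite-dimensional Hilbert space, a^{1/2} b a^{1/2} = b^{1/2} a b^{1/2} holds if and only if ab = ba. Consequently, Bayes' quantum second rule holds relative to the Lüders operations 𝓛^(a), 𝓛^(b) for all states if and only if a and b commute. -/
/-!
Write `u = a^{1/2}` and `y = b^{1/2}`. The equation `u y² u = y u² y` says exactly that `N = u y`
is normal, and `N = a^{1/4} (a^{1/4} y)` has the same nonzero spectrum as the self-adjoint
`a^{1/4} y a^{1/4}`, so its spectrum is real. A normal element with real spectrum is self-adjoint,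
hence `u y = y u`, and `a = u²`, `b = y²` commute. This works in any C⋆-algebra.

Bayes' rule for `ρ` amounts to `tr(ρ a^{1/2} b a^{1/2}) = tr(ρ b^{1/2} a b^{1/2})`. It is only
required when `tr(ρa), tr(ρb) ≠ 0`, but the normalisation of `P + 1` is such a state for every
positive `P`, so by linearity the two traces agree against every positive `P`, in particular
against every `w w*`, which forces the two operators to be equal.
-/

open scoped ComplexOrder

open Matrix BigOperators

/-- The positive semidefinite square root of a positive semidefinite matrix
(the definition `Matrix.PosSemidef.sqrt` of the older Mathlib, since removed). -/
noncomputable def Matrix.PosSemidef.sqrt {n : Type*} [Fintype n] [DecidableEq n]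
    {A : Matrix n n ℂ} (hA : A.PosSemidef) : Matrix n n ℂ :=
  hA.1.eigenvectorUnitary.1 * diagonal ((↑) ∘ (√·) ∘ hA.1.eigenvalues) *
  (star hA.1.eigenvectorUnitary : Matrix n n ℂ)

/-- A state: positive operator of trace one. -/
def IsState {n : ℕ} (ρ : Matrix (Fin n) (Fin n) ℂ) : Prop :=
  ρ.PosSemidef ∧ ρ.trace = 1

section CStarAlgebra

open CFC

variable {A : Type*} [CStarAlgebra A] [PartialOrder A] [StarOrderedRing A]

theorem quasispectrumRestricts_mul_of_nonneg {u y : A} (hu : 0 ≤ u) (hy : IsSelfAdjoint y) :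
    QuasispectrumRestricts (u * y) Complex.reCLM := by
  have hc : IsSelfAdjoint (sqrt u) := (sqrt_nonneg u).isSelfAdjoint
  have hcyc : IsSelfAdjoint (sqrt u * y * sqrt u) := by
    simpa only [hc.star_eq] using hy.conjugate (sqrt u)
  rw [← sqrt_mul_sqrt_self u hu, mul_assoc]
  exact hcyc.quasispectrumRestricts.mul_comm

theorem commute_of_mul_mul_self_mul_eq {u y : A} (hu : 0 ≤ u) (hy : IsSelfAdjoint y)
    (h : u * (y * y) * u = y * (u * u) * y) : Commute u y := by
  have hstar : star (u * y) = y * u := by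
    rw [star_mul, hy.star_eq, hu.isSelfAdjoint.star_eq]
  have hnormal : IsStarNormal (u * y) := ⟨by
    simp only [Commute, SemiconjBy, hstar]
    calc y * u * (u * y) = y * (u * u) * y := by noncomm_ring
      _ = u * (y * y) * u := h.symm
      _ = u * y * (y * u) := by noncomm_ring⟩
  have hsa : IsSelfAdjoint (u * y) :=
    isSelfAdjoint_iff_isStarNormal_and_quasispectrumRestricts.mpr
      ⟨hnormal, quasispectrumRestricts_mul_of_nonneg hu hy⟩
  exact hsa.star_eq.symm.trans hstar

theorem Commute.sqrt_left {a b : A} (h : Commute a b) : Commute (sqrt a) b := by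
  rw [sqrt_eq_cfc]
  exact h.cfc_nnreal _

theorem CFC.sqrt_mul_mul_sqrt_eq_iff_commute {a b : A} (ha : 0 ≤ a) (hb : 0 ≤ b) :
    sqrt a * b * sqrt a = sqrt b * a * sqrt b ↔ Commute a b := by
  constructor
  · intro h
    have hsqrt : Commute (sqrt a) (sqrt b) := by
      refine commute_of_mul_mul_self_mul_eq (sqrt_nonneg a) (sqrt_nonneg b).isSelfAdjoint ?_
      rwa [sqrt_mul_sqrt_self a ha, sqrt_mul_sqrt_self b hb]
    rw [← sqrt_mul_sqrt_self a ha, ← sqrt_mul_sqrt_self b hb]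
    exact (hsqrt.mul_right hsqrt).mul_left (hsqrt.mul_right hsqrt)
  · intro h
    rw [h.sqrt_left.eq, h.symm.sqrt_left.eq, mul_assoc, sqrt_mul_sqrt_self a ha, mul_assoc,
      sqrt_mul_sqrt_self b hb, h.eq]

end CStarAlgebra

open scoped MatrixOrder

namespace Matrix

theorem trace_vecMulVec_mul {n R : Type*} [Fintype n] [CommSemiring R] (w v : n → R)
    (M : Matrix n n R) : (vecMulVec w v * M).trace = v ⬝ᵥ M *ᵥ w := by
  rw [vecMulVec_mul, trace_vecMulVec, dotProduct_comm, dotProduct_mulVec]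

section

variable {n : Type*} [Fintype n] [DecidableEq n]

theorem PosSemidef.sqrt_eq_cfcSqrt {a : Matrix n n ℂ} (ha : a.PosSemidef) :
    ha.sqrt = CFC.sqrt a := by
  rw [CFC.sqrt_eq_real_sqrt a ha.nonneg, cfcₙ_eq_cfc, ha.1.cfc_eq]
  rfl

open scoped Matrix.Norms.L2Operator in
theorem PosSemidef.sqrt_mul_mul_sqrt_eq_iff_commute {a b : Matrix n n ℂ} (ha : a.PosSemidef)
    (hb : b.PosSemidef) : ha.sqrt * b * ha.sqrt = hb.sqrt * a * hb.sqrt ↔ Commute a b := by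
  rw [ha.sqrt_eq_cfcSqrt, hb.sqrt_eq_cfcSqrt]
  exact CFC.sqrt_mul_mul_sqrt_eq_iff_commute ha.nonneg hb.nonneg

theorem eq_of_forall_dotProduct_mulVec_eq {M N : Matrix n n ℂ}
    (h : ∀ v, star v ⬝ᵥ M *ᵥ v = star v ⬝ᵥ N *ᵥ v) : M = N := by
  refine toEuclideanLin.injective ((ext_inner_map _ _).mp fun x => ?_)
  rw [← inner_conj_symm, ← inner_conj_symm (toEuclideanLin N x)]
  simp only [ofLp_toLpLin, toLin'_apply, EuclideanSpace.inner_eq_star_dotProduct,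
    dotProduct_comm _ (star _), h]

theorem eq_of_forall_posSemidef_trace_mul_eq {M N : Matrix n n ℂ}
    (h : ∀ P : Matrix n n ℂ, P.PosSemidef → (P * M).trace = (P * N).trace) : M = N :=
  eq_of_forall_dotProduct_mulVec_eq fun w => by
    simpa only [trace_vecMulVec_mul] using h _ (posSemidef_vecMulVec_self_star w)

theorem PosSemidef.trace_mul_nonneg {P a : Matrix n n ℂ} (hP : P.PosSemidef)
    (ha : a.PosSemidef) : 0 ≤ (P * a).trace := by
  obtain ⟨b, rfl⟩ := CStarAlgebra.nonneg_iff_eq_star_mul_self.mp ha.nonneg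
  rw [← mul_assoc, trace_mul_cycle]
  exact (hP.mul_mul_conjTranspose_same b).trace_nonneg

theorem PosSemidef.trace_add_one_mul_pos {P a : Matrix n n ℂ} (hP : P.PosSemidef)
    (ha : a.PosSemidef) (ha0 : a ≠ 0) : 0 < ((P + 1) * a).trace := by
  have htr : 0 < a.trace := ha.trace_nonneg.lt_of_ne' (ha.trace_eq_zero_iff.not.mpr ha0)
  rw [add_mul, one_mul, trace_add]
  exact add_pos_of_nonneg_of_pos (hP.trace_mul_nonneg ha) htr

end

theorem PosSemidef.isState_trace_inv_smul {n : ℕ} {P : Matrix (Fin n) (Fin n) ℂ}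
    (hP : P.PosSemidef) (htr : P.trace ≠ 0) : IsState (P.trace⁻¹ • P) :=
  ⟨hP.smul (inv_pos.mpr (hP.trace_nonneg.lt_of_ne' htr)).le,
    by rw [trace_smul, smul_eq_mul, inv_mul_cancel₀ htr]⟩

theorem PosSemidef.trace_mul_eq_of_forall_isState {n : ℕ}
    {P a b M N : Matrix (Fin n) (Fin n) ℂ} (hP : P.PosSemidef)
    (hPa : (P * a).trace ≠ 0) (hPb : (P * b).trace ≠ 0)
    (h : ∀ ρ, IsState ρ → (ρ * a).trace ≠ 0 → (ρ * b).trace ≠ 0 →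
      (ρ * M).trace = (ρ * N).trace) : (P * M).trace = (P * N).trace := by
  have htr : P.trace ≠ 0 := fun h0 =>
    hPa (by rw [hP.trace_eq_zero_iff.mp h0, zero_mul, trace_zero])
  have hc : P.trace⁻¹ ≠ 0 := inv_ne_zero htr
  have hscale : ∀ X, (P.trace⁻¹ • P * X).trace = P.trace⁻¹ * (P * X).trace :=
    fun X => by rw [smul_mul, trace_smul, smul_eq_mul]
  have hρ := h _ (hP.isState_trace_inv_smul htr)
    (by rw [hscale]; exact mul_ne_zero hc hPa) (by rw [hscale]; exact mul_ne_zero hc hPb)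
  rw [hscale, hscale] at hρ
  exact mul_left_cancel₀ hc hρ

end Matrix

theorem eq_of_forall_isState_trace_mul_ne_zero {n : ℕ} {a b M N : Matrix (Fin n) (Fin n) ℂ}
    (ha : a.PosSemidef) (hb : b.PosSemidef) (ha0 : a ≠ 0) (hb0 : b ≠ 0)
    (h : ∀ ρ, IsState ρ → (ρ * a).trace ≠ 0 → (ρ * b).trace ≠ 0 →
      (ρ * M).trace = (ρ * N).trace) : M = N := by
  have hperturbed : ∀ P : Matrix (Fin n) (Fin n) ℂ, P.PosSemidef →
      ((P + 1) * M).trace = ((P + 1) * N).trace := fun P hP =>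
    (hP.add PosSemidef.one).trace_mul_eq_of_forall_isState
      (hP.trace_add_one_mul_pos ha ha0).ne' (hP.trace_add_one_mul_pos hb hb0).ne' h
  refine eq_of_forall_posSemidef_trace_mul_eq fun P hP => ?_
  have hone := hperturbed 0 PosSemidef.zero
  have hP1 := hperturbed P hP
  simp only [zero_add, one_mul] at hone
  rw [add_mul, add_mul, one_mul, one_mul, trace_add, trace_add, hone] at hP1
  exact add_right_cancel hP1

theorem luders_bayes_iff_commute_general {n : ℕ}
    (a b : Matrix (Fin n) (Fin n) ℂ)
    (ha : a.PosSemidef)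
    (hb : b.PosSemidef) :
    (ha.sqrt * b * ha.sqrt = hb.sqrt * a * hb.sqrt ↔ a * b = b * a) ∧
    ((∀ ρ : Matrix (Fin n) (Fin n) ℂ, IsState ρ →
        (ρ * a).trace ≠ 0 → (ρ * b).trace ≠ 0 →
        (ρ * (ha.sqrt * b * ha.sqrt)).trace / (ρ * a).trace =
          ((ρ * b).trace / (ρ * a).trace) *
            ((ρ * (hb.sqrt * a * hb.sqrt)).trace / (ρ * b).trace))
      ↔ a * b = b * a) := by
  have hsqrt := ha.sqrt_mul_mul_sqrt_eq_iff_commute hb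
  have hbayes : ∀ {x y p q : ℂ}, p ≠ 0 → q ≠ 0 → (x / p = q / p * (y / q) ↔ x = y) :=
    fun hp hq => by rw [mul_comm, div_mul_div_cancel₀ hq, div_left_inj' hp]
  refine ⟨hsqrt, fun h => ?_, fun h ρ _ hta htb => (hbayes hta htb).mpr (by rw [hsqrt.mpr h])⟩
  by_cases ha0 : a = 0
  · simp [ha0]
  by_cases hb0 : b = 0
  · simp [hb0]
  exact hsqrt.mp <| eq_of_forall_isState_trace_mul_ne_zero ha hb ha0 hb0 fun ρ hρ hta htb =>
    (hbayes hta htb).mp (h ρ hρ hta htb)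

/-- for effects `a, b`, `a^{1/2} b a^{1/2} = b^{1/2} a b^{1/2}` holds iff
`ab = ba`; consequently Bayes' quantum second rule holds relative to the Lüders
operations `𝓛^(a)`, `𝓛^(b)` (so `P_ρ(b|a) = tr(ρ a^{1/2} b a^{1/2})/tr(ρa)`) for all
states iff `a` and `b` commute. -/
theorem luders_bayes_iff_commute {n : ℕ}
    (a b : Matrix (Fin n) (Fin n) ℂ)
    (ha : a.PosSemidef) (ha' : (1 - a).PosSemidef)
    (hb : b.PosSemidef) (hb' : (1 - b).PosSemidef) :
    (ha.sqrt * b * ha.sqrt = hb.sqrt * a * hb.sqrt ↔ a * b = b * a) ∧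
    ((∀ ρ : Matrix (Fin n) (Fin n) ℂ, IsState ρ →
        (ρ * a).trace ≠ 0 → (ρ * b).trace ≠ 0 →
        (ρ * (ha.sqrt * b * ha.sqrt)).trace / (ρ * a).trace =
          ((ρ * b).trace / (ρ * a).trace) *
            ((ρ * (hb.sqrt * a * hb.sqrt)).trace / (ρ * b).trace))
      ↔ a * b = b * a) :=
  luders_bayes_iff_commute_general a b ha hb
end

section
/- Bayes' quantum first rule for expectations: if instrument 𝓘 measures observable A and B is a real-valued observable, then Σ_{x ∈ Ω_A} P_ρ(A_x)·E_ρ(B|A_x) = E_ρ[(B|A)] = E_{𝓘̄(ρ)}(B), where E_{𝓘̄(ρ)}(B) = Σ_y y·tr[𝓘̄(ρ)B_y]. -/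
open scoped ComplexOrder

open Matrix BigOperators

open Classical in
/-- Bayes' quantum first rule for expectations: if instrument
`𝓘 = {𝓘_x}` measures observable `A = {A_x}` and `B = {B_y : y ∈ Ω_B}` is a
real-valued observable, then for every state `ρ`,
`Σ_x P_ρ(A_x)·E_ρ(B|A_x) = E_ρ[(B|A)] = E_{𝓘̄(ρ)}(B)`
(terms with `P_ρ(A_x) = 0` being `Σ_y y·tr[ρ𝓘_x*(B_y)]`). -/
theorem bayes_quantum_first_rule_expectations {n : ℕ} {X : Type*} [Fintype X]
    (I : X → Matrix (Fin n) (Fin n) ℂ →ₗ[ℂ] Matrix (Fin n) (Fin n) ℂ)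
    (Id : X → Matrix (Fin n) (Fin n) ℂ →ₗ[ℂ] Matrix (Fin n) (Fin n) ℂ)
    (A : X → Matrix (Fin n) (Fin n) ℂ)
    (hA : ∀ x, IsEffect (A x)) (hAsum : ∑ x, A x = 1)
    (hpos : ∀ x, ∀ ρ : Matrix (Fin n) (Fin n) ℂ, ρ.PosSemidef → (I x ρ).PosSemidef)
    (hId : ∀ x, ∀ ρ M : Matrix (Fin n) (Fin n) ℂ,
      (I x ρ * M).trace = (ρ * Id x M).trace)
    (hmeasI : ∀ x, ∀ ρ : Matrix (Fin n) (Fin n) ℂ, IsState ρ →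
      (I x ρ).trace = (ρ * A x).trace)
    (ΩB : Finset ℝ) (B : ℝ → Matrix (Fin n) (Fin n) ℂ)
    (hB : ∀ y ∈ ΩB, IsEffect (B y)) (hBsum : ∑ y ∈ ΩB, B y = 1) :
    ∀ ρ : Matrix (Fin n) (Fin n) ℂ, IsState ρ →
      (∑ x, if (ρ * A x).trace ≠ 0 then
          (ρ * A x).trace *
            (∑ y ∈ ΩB, (y : ℂ) * (ρ * Id x (B y)).trace / (ρ * A x).trace)
        else ∑ y ∈ ΩB, (y : ℂ) * (ρ * Id x (B y)).trace)
        = ∑ y ∈ ΩB, (y : ℂ) * (ρ * ∑ x, Id x (B y)).trace ∧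
      (∑ y ∈ ΩB, (y : ℂ) * (ρ * ∑ x, Id x (B y)).trace)
        = ∑ y ∈ ΩB, (y : ℂ) * ((∑ x, I x ρ) * B y).trace := by
  intro ρ hρ
  constructor
  · have h1 : ∀ x, (if (ρ * A x).trace ≠ 0 then
          (ρ * A x).trace *
            (∑ y ∈ ΩB, (y : ℂ) * (ρ * Id x (B y)).trace / (ρ * A x).trace)
        else ∑ y ∈ ΩB, (y : ℂ) * (ρ * Id x (B y)).trace)
        = ∑ y ∈ ΩB, (y : ℂ) * (ρ * Id x (B y)).trace := by
      intro x
      split_ifs with h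
      · rw [Finset.mul_sum]
        refine Finset.sum_congr rfl fun y _ => ?_
        field_simp
      · rfl
    simp only [h1]
    rw [Finset.sum_comm]
    refine Finset.sum_congr rfl fun y _ => ?_
    rw [← Finset.mul_sum, Matrix.mul_sum, Matrix.trace_sum]
  · refine Finset.sum_congr rfl fun y _ => ?_
    rw [Matrix.mul_sum, Matrix.trace_sum, Matrix.sum_mul, Matrix.trace_sum]
    congr 1
    exact Finset.sum_congr rfl fun x _ => (hId x ρ (B y)).symm
end

section
/- If A = {A_x} is an atomic observable measured by some instrument 𝓘, and B, C are observables such that B = (B₁|A) and C = (C₁|A) for some observables B₁, C₁ (conditioning relative to 𝓘), then B and C are jointly commuting, i.e., all effects B_y and C_z mutually commute. -/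
/-! The instrument's duals map effects `0 ≤ M ≤ 1` to `0 ≤ 𝓘_x*(M) ≤ A_x`; below a rank-one
projection `P` every positive operator `T` satisfies `T = P T P`, a scalar multiple of `P`. So all
`B_y` and `C_z` are diagonal in the projections `A_x`, which are pairwise orthogonal
since they sum to `1`, and therefore commute. -/

open scoped ComplexOrder

open Matrix BigOperators

open scoped Matrix.Norms.L2Operator MatrixOrder

open Module

theorem IsStarProjection.mul_eq_zero_of_sum_eq_one {A ι : Type*} [CStarAlgebra A]
    [PartialOrder A] [StarOrderedRing A] [Fintype ι] {p : ι → A}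
    (hp : ∀ i, IsStarProjection (p i)) (hsum : ∑ i, p i = 1) {i j : ι} (hij : i ≠ j) :
    p i * p j = 0 := by
  classical
  have hle : p i ≤ 1 - p j := by
    rw [le_sub_iff_add_le, ← Finset.sum_pair hij, ← hsum]
    exact Finset.sum_le_sum_of_subset_of_nonneg (Finset.subset_univ _)
      fun k _ _ => (hp k).nonneg
  have hmul := ((hp i).le_iff_mul_eq_left (hp j).one_sub).mp hle
  rwa [mul_sub, mul_one, sub_eq_self] at hmul

theorem LinearMap.exists_comp_comp_eq_smul_of_finrank_range_eq_one {K V : Type*} [Field K]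
    [AddCommGroup V] [Module K V] {f : V →ₗ[K] V} (hf : finrank K (range f) = 1)
    (g : V →ₗ[K] V) : ∃ c : K, f ∘ₗ g ∘ₗ f = c • f := by
  obtain ⟨v, -, hv⟩ := finrank_eq_one_iff'.mp hf
  obtain ⟨c, hc⟩ := hv ⟨f (g v), mem_range_self f _⟩
  refine ⟨c, LinearMap.ext fun u => ?_⟩
  obtain ⟨t, ht⟩ := hv ⟨f u, mem_range_self f u⟩
  have hc' : c • (v : V) = f (g v) := congrArg Subtype.val hc
  have ht' : t • (v : V) = f u := congrArg Subtype.val ht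
  simp only [comp_apply, smul_apply, ← ht', map_smul, ← hc', smul_comm t c]

theorem Matrix.exists_mul_mul_eq_smul_of_rank_eq_one {K m : Type*} [Field K] [Fintype m]
    [DecidableEq m] {P : Matrix m m K} (hP : P.rank = 1) (M : Matrix m m K) :
    ∃ c : K, P * M * P = c • P := by
  obtain ⟨c, hc⟩ :=
    LinearMap.exists_comp_comp_eq_smul_of_finrank_range_eq_one hP M.mulVecLin
  refine ⟨c, toLin'.injective ?_⟩
  rw [map_smul, toLin'_apply', toLin'_apply', mulVecLin_mul, mulVecLin_mul, LinearMap.comp_assoc,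
    hc]

theorem Matrix.exists_eq_smul_of_nonneg_of_le_of_rank_eq_one {m : Type*} [Fintype m]
    [DecidableEq m] {P T : Matrix m m ℂ} (hP : IsStarProjection P) (hrank : P.rank = 1)
    (hT : 0 ≤ T) (hTP : T ≤ P) : ∃ c : ℂ, T = c • P := by
  rw [← hP.conjugate_of_nonneg_of_le hT hTP]
  exact exists_mul_mul_eq_smul_of_rank_eq_one hrank T

theorem Commute.sum_smul_of_pairwise_mul_eq_zero {S R ι : Type*} [CommSemiring S] [Semiring R]
    [Algebra S R] [Fintype ι] {p : ι → R} (hp : Pairwise fun i j => p i * p j = 0)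
    (a b : ι → S) : Commute (∑ i, a i • p i) (∑ i, b i • p i) := by
  refine Commute.sum_left _ _ _ fun i _ => Commute.sum_right _ _ _ fun j _ => ?_
  refine ((?_ : Commute (p i) (p j)).smul_left _).smul_right _
  obtain rfl | hij := eq_or_ne i j
  · exact Commute.refl _
  · rw [commute_iff_eq, hp hij, hp hij.symm]

theorem jointly_commuting_of_conditioned_general {n : ℕ} {X Y Z : Type*}
    [Fintype X] [Fintype Y] [Fintype Z]
    (Id : X → Matrix (Fin n) (Fin n) ℂ →ₗ[ℂ] Matrix (Fin n) (Fin n) ℂ)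
    (A : X → Matrix (Fin n) (Fin n) ℂ)
    (hatom : ∀ x, IsAtomicEffect (A x)) (hAsum : ∑ x, A x = 1)
    (hIdpos : ∀ x, ∀ M : Matrix (Fin n) (Fin n) ℂ, M.PosSemidef → (Id x M).PosSemidef)
    (hmeasI : ∀ x, Id x 1 = A x)
    (B1 : Y → Matrix (Fin n) (Fin n) ℂ) (C1 : Z → Matrix (Fin n) (Fin n) ℂ)
    (hB1 : ∀ y, IsEffect (B1 y))
    (hC1 : ∀ z, IsEffect (C1 z))
    (B : Y → Matrix (Fin n) (Fin n) ℂ) (C : Z → Matrix (Fin n) (Fin n) ℂ)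
    (hB : ∀ y, B y = ∑ x, Id x (B1 y)) (hC : ∀ z, C z = ∑ x, Id x (C1 z)) :
    (∀ y y', B y * B y' = B y' * B y) ∧
    (∀ z z', C z * C z' = C z' * C z) ∧
    (∀ y z, B y * C z = C z * B y) := by
  have hproj : ∀ x, IsStarProjection (A x) := fun x =>
    ⟨(hatom x).2.1, isHermitian_iff_isSelfAdjoint.mp (hatom x).1⟩
  have horth : Pairwise fun x x' => A x * A x' = 0 := fun _ _ =>
    IsStarProjection.mul_eq_zero_of_sum_eq_one hproj hAsum
  have hscalar : ∀ x M, IsEffect M → ∃ c : ℂ, Id x M = c • A x := fun x M hM =>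
    exists_eq_smul_of_nonneg_of_le_of_rank_eq_one (hproj x) (hatom x).2.2 (hIdpos x M hM.1).nonneg
      (le_iff.mpr (by simpa [map_sub, hmeasI] using hIdpos x _ hM.2))
  choose b hb using fun x y => hscalar x (B1 y) (hB1 y)
  choose c hc using fun x z => hscalar x (C1 z) (hC1 z)
  have hBc : ∀ y, B y = ∑ x, b x y • A x := fun y => by simp only [hB, hb]
  have hCc : ∀ z, C z = ∑ x, c x z • A x := fun z => by simp only [hC, hc]
  refine ⟨fun y y' => ?_, fun z z' => ?_, fun y z => ?_⟩
  · rw [hBc, hBc]; exact Commute.sum_smul_of_pairwise_mul_eq_zero horth _ _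
  · rw [hCc, hCc]; exact Commute.sum_smul_of_pairwise_mul_eq_zero horth _ _
  · rw [hBc, hCc]; exact Commute.sum_smul_of_pairwise_mul_eq_zero horth _ _

/-- if `A = {A_x}` is an atomic observable measured by an instrument
`𝓘` (with duals `𝓘_x*`) and `B, C` are observables with `B = (B₁|A)`, `C = (C₁|A)`
for observables `B₁, C₁`, i.e. `B_y = Σ_x 𝓘_x*(B₁_y)` and `C_z = Σ_x 𝓘_x*(C₁_z)`,
then `B` and `C` are jointly commuting. -/
theorem jointly_commuting_of_conditioned {n : ℕ} {X Y Z : Type*}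
    [Fintype X] [Fintype Y] [Fintype Z]
    (I : X → Matrix (Fin n) (Fin n) ℂ →ₗ[ℂ] Matrix (Fin n) (Fin n) ℂ)
    (Id : X → Matrix (Fin n) (Fin n) ℂ →ₗ[ℂ] Matrix (Fin n) (Fin n) ℂ)
    (A : X → Matrix (Fin n) (Fin n) ℂ)
    (hatom : ∀ x, IsAtomicEffect (A x)) (hAsum : ∑ x, A x = 1)
    (hId : ∀ x, ∀ ρ M : Matrix (Fin n) (Fin n) ℂ,
      (I x ρ * M).trace = (ρ * Id x M).trace)
    (hIdpos : ∀ x, ∀ M : Matrix (Fin n) (Fin n) ℂ, M.PosSemidef → (Id x M).PosSemidef)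
    (hmeasI : ∀ x, Id x 1 = A x)
    (B1 : Y → Matrix (Fin n) (Fin n) ℂ) (C1 : Z → Matrix (Fin n) (Fin n) ℂ)
    (hB1 : ∀ y, IsEffect (B1 y)) (hB1sum : ∑ y, B1 y = 1)
    (hC1 : ∀ z, IsEffect (C1 z)) (hC1sum : ∑ z, C1 z = 1)
    (B : Y → Matrix (Fin n) (Fin n) ℂ) (C : Z → Matrix (Fin n) (Fin n) ℂ)
    (hB : ∀ y, B y = ∑ x, Id x (B1 y)) (hC : ∀ z, C z = ∑ x, Id x (C1 z)) :
    (∀ y y', B y * B y' = B y' * B y) ∧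
    (∀ z z', C z * C z' = C z' * C z) ∧
    (∀ y z, B y * C z = C z * B y) :=
  jointly_commuting_of_conditioned_general Id A hatom hAsum hIdpos hmeasI B1 C1 hB1 hC1 B C hB hC
end

section
/- If observables B and C are jointly commuting (all B_y, C_z mutually commute), then there exists an atomic observable A such that, relative to the Lüders instrument 𝓛_x^A(ρ) = A_x ρ A_x measuring A, one has B = (B|A) and C = (C|A), i.e., B_y = Σ_x A_x B_y A_x and C_z = Σ_x A_x C_z A_x for all y, z. -/
/-!
The `B y` and `C z` form one commuting family of Hermitian matrices, so they have a common
orthonormal eigenbasis `(b x)`; let `A x` be the orthogonal projection onto `b x`.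
If `M (b x) = μ • b x` then `A x * M * A x = μ • A x = M * A x`, and summing over `x`
with `∑ x, A x = 1` gives `∑ x, A x * M * A x = M` for every `M` of the family.
-/

open scoped ComplexOrder

open Matrix BigOperators

open Module.End in
theorem LinearMap.IsSymmetric.exists_orthonormalBasis_common_eigenvectors
    {𝕜 E ι : Type*} [RCLike 𝕜] [NormedAddCommGroup E] [InnerProductSpace 𝕜 E]
    [FiniteDimensional 𝕜 E] {T : ι → E →ₗ[𝕜] E} (hT : ∀ i, (T i).IsSymmetric)
    (hC : Pairwise (Function.onFun Commute T)) {n : ℕ} (hn : Module.finrank 𝕜 E = n) :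
    ∃ b : OrthonormalBasis (Fin n) 𝕜 E, ∀ x i, ∃ μ : 𝕜, T i (b x) = μ • b x := by
  classical
  let V (χ : ι → 𝕜) : Submodule 𝕜 E := ⨅ i, eigenspace (T i) (χ i)
  have hInt : DirectSum.IsInternal V := directSum_isInternal_of_pairwise_commute hT hC
  -- the subordinate basis needs a finite index type: keep only the nonzero joint eigenspaces
  have : Fintype {χ // V χ ≠ ⊥} := hInt.submodule_iSupIndep.fintypeNeBotOfFiniteDimensional
  have hV := DirectSum.isInternal_ne_bot_iff.mpr hInt
  have hV' := (orthogonalFamily_iInf_eigenspaces hT).comp (Subtype.val_injective (p := (V · ≠ ⊥)))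
  refine ⟨hV.subordinateOrthonormalBasis hn hV',
    fun x i => ⟨(hV.subordinateOrthonormalBasisIndex hn x hV').1 i, ?_⟩⟩
  exact mem_eigenspace_iff.mp <|
    (Submodule.mem_iInf _).mp (hV.subordinateOrthonormalBasis_subordinate hn x hV') i

theorem Matrix.exists_orthonormalBasis_common_eigenvectors {𝕜 ι : Type*} [RCLike 𝕜] {n : ℕ}
    {M : ι → Matrix (Fin n) (Fin n) 𝕜} (hM : ∀ i, (M i).IsHermitian)
    (hC : ∀ i j, M i * M j = M j * M i) :
    ∃ b : OrthonormalBasis (Fin n) 𝕜 (EuclideanSpace 𝕜 (Fin n)),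
      ∀ x i, ∃ μ : 𝕜, M i *ᵥ (b x).ofLp = μ • (b x).ofLp := by
  have hT i := isSymmetric_toEuclideanLin_iff.mpr (hM i)
  have hTC : Pairwise (Function.onFun Commute fun i => toEuclideanLin (M i)) := fun i j _ =>
    Commute.map (hC i j) (toLpLinAlgEquiv 2)
  obtain ⟨b, hb⟩ := LinearMap.IsSymmetric.exists_orthonormalBasis_common_eigenvectors hT hTC
    finrank_euclideanSpace_fin
  refine ⟨b, fun x i => ?_⟩
  obtain ⟨μ, hμ⟩ := hb x i
  exact ⟨μ, by simpa using congrArg WithLp.ofLp hμ⟩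

theorem Matrix.rank_pos_of_ne_zero {K m n : Type*} [Field K] [Fintype n]
    {A : Matrix m n K} (hA : A ≠ 0) : 0 < A.rank := by
  rw [Matrix.rank, Module.finrank_pos_iff, Submodule.nontrivial_iff_ne_bot, Ne,
    LinearMap.range_eq_bot]
  classical
  exact fun h => hA (Matrix.toLin'.injective (by rw [Matrix.toLin'_apply', h, map_zero]))

section RankOneProjection

variable {𝕜 m : Type*} [RCLike 𝕜] [Fintype m] {v : m → 𝕜}

theorem Matrix.vecMulVec_star_self_mul_self (hv : star v ⬝ᵥ v = 1) :
    vecMulVec v (star v) * vecMulVec v (star v) = vecMulVec v (star v) := by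
  rw [vecMulVec_mul_vecMulVec, hv, one_smul]

theorem Matrix.rank_vecMulVec_star_self (hv : star v ⬝ᵥ v = 1) :
    (vecMulVec v (star v)).rank = 1 := by
  refine le_antisymm (rank_vecMulVec_le _ _) (rank_pos_of_ne_zero fun h => ?_)
  have hv0 : v = 0 := by simpa [vecMulVec_mulVec, hv] using congrArg (· *ᵥ v) h
  simp [hv0] at hv

theorem Matrix.mul_vecMulVec_star_self_of_mulVec_eq_smul {M : Matrix m m 𝕜} {μ : 𝕜}
    (h : M *ᵥ v = μ • v) : M * vecMulVec v (star v) = μ • vecMulVec v (star v) := by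
  rw [mul_vecMulVec, h, smul_vecMulVec]

theorem Matrix.vecMulVec_star_self_mul_mul_self_of_mulVec_eq_smul {M : Matrix m m 𝕜} {μ : 𝕜}
    (hv : star v ⬝ᵥ v = 1) (h : M *ᵥ v = μ • v) :
    vecMulVec v (star v) * M * vecMulVec v (star v) = M * vecMulVec v (star v) := by
  rw [mul_assoc, mul_vecMulVec_star_self_of_mulVec_eq_smul h, Matrix.mul_smul,
    vecMulVec_star_self_mul_self hv]

end RankOneProjection

theorem isAtomicEffect_vecMulVec_star_self {n : ℕ} {v : Fin n → ℂ} (hv : star v ⬝ᵥ v = 1) :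
    IsAtomicEffect (vecMulVec v (star v)) :=
  ⟨(posSemidef_vecMulVec_self_star v).isHermitian, vecMulVec_star_self_mul_self hv,
    rank_vecMulVec_star_self hv⟩

namespace OrthonormalBasis

variable {𝕜 m ι : Type*} [RCLike 𝕜] [Fintype m] [Fintype ι]
  (b : OrthonormalBasis ι 𝕜 (EuclideanSpace 𝕜 m))

theorem star_dotProduct_self (x : ι) : star (b x).ofLp ⬝ᵥ (b x).ofLp = 1 := by
  rw [dotProduct_comm, ← EuclideanSpace.inner_eq_star_dotProduct, inner_self_eq_norm_sq_to_K,
    b.orthonormal.1 x]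
  simp

theorem sum_vecMulVec_star_self [DecidableEq m] :
    ∑ x, vecMulVec (b x).ofLp (star (b x).ofLp) = 1 := by
  simp_rw [← InnerProductSpace.symm_toEuclideanLin_rankOne, ← map_sum,
    ← ContinuousLinearMap.toLinearMap_sum, b.sum_rankOne_eq_id]
  exact toLpLin_symm_id 2

theorem sum_vecMulVec_star_self_mul_mul_self [DecidableEq m] {M : Matrix m m 𝕜}
    (hM : ∀ x, ∃ μ : 𝕜, M *ᵥ (b x).ofLp = μ • (b x).ofLp) :
    ∑ x, vecMulVec (b x).ofLp (star (b x).ofLp) * M * vecMulVec (b x).ofLp (star (b x).ofLp) =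
      M := by
  calc _ = ∑ x, M * vecMulVec (b x).ofLp (star (b x).ofLp) := by
        refine Finset.sum_congr rfl fun x _ => ?_
        obtain ⟨μ, hμ⟩ := hM x
        exact vecMulVec_star_self_mul_mul_self_of_mulVec_eq_smul (b.star_dotProduct_self x) hμ
    _ = M := by rw [← Finset.mul_sum, b.sum_vecMulVec_star_self, mul_one]

end OrthonormalBasis

theorem atomic_observable_of_jointly_commuting_general {n : ℕ} {Y Z : Type*}
    [Fintype Y] [Fintype Z]
    (B : Y → Matrix (Fin n) (Fin n) ℂ) (C : Z → Matrix (Fin n) (Fin n) ℂ)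
    (hB : ∀ y, IsEffect (B y))
    (hC : ∀ z, IsEffect (C z))
    (hBB : ∀ y y', B y * B y' = B y' * B y)
    (hCC : ∀ z z', C z * C z' = C z' * C z)
    (hBC : ∀ y z, B y * C z = C z * B y) :
    ∃ A : Fin n → Matrix (Fin n) (Fin n) ℂ,
      (∀ x, IsAtomicEffect (A x)) ∧ (∑ x, A x = 1) ∧
      (∀ y, B y = ∑ x, A x * B y * A x) ∧
      (∀ z, C z = ∑ x, A x * C z * A x) := by
  let M : Y ⊕ Z → Matrix (Fin n) (Fin n) ℂ := Sum.elim B C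
  have hM : ∀ i, (M i).IsHermitian := by
    rintro (y | z)
    exacts [(hB y).1.isHermitian, (hC z).1.isHermitian]
  have hMM : ∀ i j, M i * M j = M j * M i := by
    rintro (y | z) (y' | z')
    exacts [hBB y y', hBC y z', (hBC y' z).symm, hCC z z']
  obtain ⟨b, hb⟩ := exists_orthonormalBasis_common_eigenvectors hM hMM
  refine ⟨fun x => vecMulVec (b x).ofLp (star (b x).ofLp),
    fun x => isAtomicEffect_vecMulVec_star_self (b.star_dotProduct_self x),
    b.sum_vecMulVec_star_self, fun y => ?_, fun z => ?_⟩
  exacts [(b.sum_vecMulVec_star_self_mul_mul_self fun x => hb x (.inl y)).symm,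
    (b.sum_vecMulVec_star_self_mul_mul_self fun x => hb x (.inr z)).symm]

/-- if observables `B = {B_y}`, `C = {C_z}` are jointly commuting, then
there is an atomic observable `A = {A_x}` such that, relative to the Lüders
instrument `𝓛_x^A(ρ) = A_x ρ A_x` measuring `A`, `B = (B|A)` and `C = (C|A)`:
`B_y = Σ_x A_x B_y A_x` and `C_z = Σ_x A_x C_z A_x` for all `y, z`. -/
theorem atomic_observable_of_jointly_commuting {n : ℕ} {Y Z : Type*}
    [Fintype Y] [Fintype Z]
    (B : Y → Matrix (Fin n) (Fin n) ℂ) (C : Z → Matrix (Fin n) (Fin n) ℂ)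
    (hB : ∀ y, IsEffect (B y)) (hBsum : ∑ y, B y = 1)
    (hC : ∀ z, IsEffect (C z)) (hCsum : ∑ z, C z = 1)
    (hBB : ∀ y y', B y * B y' = B y' * B y)
    (hCC : ∀ z z', C z * C z' = C z' * C z)
    (hBC : ∀ y z, B y * C z = C z * B y) :
    ∃ A : Fin n → Matrix (Fin n) (Fin n) ℂ,
      (∀ x, IsAtomicEffect (A x)) ∧ (∑ x, A x = 1) ∧
      (∀ y, B y = ∑ x, A x * B y * A x) ∧
      (∀ z, C z = ∑ x, A x * C z * A x) :=
  atomic_observable_of_jointly_commuting_general B C hB hC hBB hCC hBC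
end

section
/- Uncertainty principle for conditioned observables: for real-valued observables B, C conditioned on A relative to an instrument 𝓘, writing X = (B|A)~ and Y = (C|A)~ for the stochastic operators, one has (1/4)|tr(ρ[X,Y])|² + [Δ_ρ(B,C|A)]² = |Cor_ρ(B,C|A)|² ≤ Δ_ρ(B|A)·Δ_ρ(C|A). -/
open scoped ComplexOrder

open Matrix BigOperators

/-- The stochastic operator `(B|A)~ = Σ_y y·(B|A)_y` of the real-valued observable
`B` conditioned on `A` relative to an instrument with dual maps `D_x`. -/
noncomputable def condStoch {n : ℕ} {X : Type*} [Fintype X]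
    (D : X → Matrix (Fin n) (Fin n) ℂ →ₗ[ℂ] Matrix (Fin n) (Fin n) ℂ)
    (ΩB : Finset ℝ) (B : ℝ → Matrix (Fin n) (Fin n) ℂ) : Matrix (Fin n) (Fin n) ℂ :=
  ∑ y ∈ ΩB, (y : ℂ) • ∑ x, D x (B y)

/-- The ρ-correlation `tr[ρXY] − tr(ρX)·tr(ρY)` of two (stochastic) operators. -/
noncomputable def corr {n : ℕ} (ρ X Y : Matrix (Fin n) (Fin n) ℂ) : ℂ :=
  (ρ * (X * Y)).trace - (ρ * X).trace * (ρ * Y).trace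

/-! Both stochastic operators are self-adjoint, so `corr ρ Y X` is the complex conjugate of
`corr ρ X Y` and `tr(ρ[X, Y]) = corr ρ X Y - corr ρ Y X = 2i · Im (corr ρ X Y)`, which gives the
identity. The inequality is Cauchy–Schwarz for the semi-inner product `⟪M, N⟫ = tr(ρ Mᴴ N)`
applied to the centred operators `X - tr(ρX)` and `Y - tr(ρY)`, whose ρ-correlation is
`corr ρ X Y` because `tr ρ = 1`. -/

theorem Matrix.PosSemidef.norm_trace_mul_conjTranspose_mul_sq_le {𝕜 ι : Type*} [RCLike 𝕜]
    [Fintype ι] {ρ : Matrix ι ι 𝕜} (hρ : ρ.PosSemidef) (M N : Matrix ι ι 𝕜) :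
    ‖(ρ * (Mᴴ * N)).trace‖ ^ 2 ≤
      RCLike.re (ρ * (Mᴴ * M)).trace * RCLike.re (ρ * (Nᴴ * N)).trace := by
  let := ρ.toMatrixSeminormedAddCommGroup hρ
  let := ρ.toMatrixInnerProductSpace hρ
  have inner_eq (P Q : Matrix ι ι 𝕜) : inner 𝕜 P Q = (ρ * (Pᴴ * Q)).trace := by
    change (Q * ρ * Pᴴ).trace = _
    rw [trace_mul_comm, ← mul_assoc, trace_mul_comm]
  have := inner_mul_inner_self_le (𝕜 := 𝕜) M N
  rwa [norm_inner_symm N M, ← sq, inner_eq, inner_eq, inner_eq] at this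

theorem Matrix.IsHermitian.star_trace_mul {α ι : Type*} [CommRing α] [StarRing α] [Fintype ι]
    {P Q : Matrix ι ι α} (hP : P.IsHermitian) (hQ : Q.IsHermitian) :
    star (P * Q).trace = (Q * P).trace := by
  rw [← trace_conjTranspose, conjTranspose_mul, hP.eq, hQ.eq]

theorem Complex.one_div_four_mul_norm_sub_star_sq_add_re_sq (z : ℂ) :
    1 / 4 * ‖z - star z‖ ^ 2 + z.re ^ 2 = ‖z‖ ^ 2 := by
  rw [Complex.star_def, Complex.sub_conj, norm_mul, Complex.norm_I, mul_one, Complex.norm_real,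
    Real.norm_eq_abs, sq_abs, Complex.sq_norm, Complex.normSq_apply]
  ring

theorem condStoch_isHermitian {n : ℕ} {X : Type*} [Fintype X]
    {D : X → Matrix (Fin n) (Fin n) ℂ →ₗ[ℂ] Matrix (Fin n) (Fin n) ℂ} {Ω : Finset ℝ}
    {B : ℝ → Matrix (Fin n) (Fin n) ℂ} (hB : ∀ y ∈ Ω, ∀ x, (D x (B y)).IsHermitian) :
    (condStoch D Ω B).IsHermitian := by
  unfold condStoch
  exact isSelfAdjoint_sum _ fun y hy =>
    .smul (Complex.conj_ofReal y) (isSelfAdjoint_sum _ fun x _ => hB y hy x)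

section Correlation

variable {n : ℕ} {ρ X Y : Matrix (Fin n) (Fin n) ℂ}

theorem star_corr (hρ : ρ.IsHermitian) (hX : X.IsHermitian) (hY : Y.IsHermitian) :
    star (corr ρ X Y) = corr ρ Y X := by
  simp only [corr, star_sub, star_mul', hρ.star_trace_mul hX, hρ.star_trace_mul hY,
    ← trace_conjTranspose, conjTranspose_mul, hρ.eq, hX.eq, hY.eq]
  rw [trace_mul_comm X ρ, trace_mul_comm Y ρ, trace_mul_comm, mul_comm (trace (ρ * X))]

theorem trace_mul_commutator (ρ X Y : Matrix (Fin n) (Fin n) ℂ) :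
    (ρ * (X * Y - Y * X)).trace = corr ρ X Y - corr ρ Y X := by
  simp only [corr, mul_sub, trace_sub]
  ring

theorem corr_eq_trace_mul_centered (hρ : ρ.trace = 1) (X Y : Matrix (Fin n) (Fin n) ℂ) :
    corr ρ X Y = (ρ * ((X - (ρ * X).trace • 1) * (Y - (ρ * Y).trace • 1))).trace := by
  simp only [corr, mul_sub, sub_mul, Matrix.mul_smul, Matrix.smul_mul, Matrix.mul_one,
    Matrix.one_mul, trace_sub, trace_smul, smul_eq_mul, hρ]
  ring

theorem isHermitian_sub_trace_mul_smul_one (hρ : ρ.IsHermitian) (hX : X.IsHermitian) :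
    (X - (ρ * X).trace • 1).IsHermitian :=
  hX.sub (isHermitian_one.smul (by rw [IsSelfAdjoint, hρ.star_trace_mul hX, trace_mul_comm]))

theorem norm_corr_sq_le (hρ : ρ.PosSemidef) (htr : ρ.trace = 1) (hX : X.IsHermitian)
    (hY : Y.IsHermitian) :
    ‖corr ρ X Y‖ ^ 2 ≤ (corr ρ X X).re * (corr ρ Y Y).re := by
  have hM := isHermitian_sub_trace_mul_smul_one hρ.isHermitian hX
  have hN := isHermitian_sub_trace_mul_smul_one hρ.isHermitian hY
  have := hρ.norm_trace_mul_conjTranspose_mul_sq_le (X - (ρ * X).trace • 1)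
    (Y - (ρ * Y).trace • 1)
  rw [hM.eq, hN.eq] at this
  simpa only [corr_eq_trace_mul_centered htr, RCLike.re_to_complex] using this

end Correlation

theorem uncertainty_principle_conditioned_general {n : ℕ} {X : Type*} [Fintype X]
    (D : X → Matrix (Fin n) (Fin n) ℂ →ₗ[ℂ] Matrix (Fin n) (Fin n) ℂ)
    (hDpos : ∀ x, ∀ M : Matrix (Fin n) (Fin n) ℂ, M.PosSemidef → (D x M).PosSemidef)
    (ΩB ΩC : Finset ℝ) (B C : ℝ → Matrix (Fin n) (Fin n) ℂ)
    (hB : ∀ y ∈ ΩB, IsEffect (B y))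
    (hC : ∀ z ∈ ΩC, IsEffect (C z))
    (ρ : Matrix (Fin n) (Fin n) ℂ) (hρ : IsState ρ) :
    (1 / 4) * ‖(ρ * (condStoch D ΩB B * condStoch D ΩC C -
          condStoch D ΩC C * condStoch D ΩB B)).trace‖ ^ 2 +
        (corr ρ (condStoch D ΩB B) (condStoch D ΩC C)).re ^ 2 =
      ‖corr ρ (condStoch D ΩB B) (condStoch D ΩC C)‖ ^ 2 ∧
    ‖corr ρ (condStoch D ΩB B) (condStoch D ΩC C)‖ ^ 2 ≤
      (corr ρ (condStoch D ΩB B) (condStoch D ΩB B)).re *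
        (corr ρ (condStoch D ΩC C) (condStoch D ΩC C)).re := by
  obtain ⟨hρpos, htr⟩ := hρ
  have hXop : (condStoch D ΩB B).IsHermitian :=
    condStoch_isHermitian fun y hy x => (hDpos x _ (hB y hy).1).isHermitian
  have hYop : (condStoch D ΩC C).IsHermitian :=
    condStoch_isHermitian fun z hz x => (hDpos x _ (hC z hz).1).isHermitian
  refine ⟨?_, norm_corr_sq_le hρpos htr hXop hYop⟩
  rw [trace_mul_commutator, ← star_corr hρpos.isHermitian hXop hYop]
  exact Complex.one_div_four_mul_norm_sub_star_sq_add_re_sq _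

/-- uncertainty principle for conditioned observables: for real-valued
observables `B, C` conditioned on an observable `A` relative to an instrument `𝓘`
(dual maps `D_x`, positive, with `D_x(I) = A_x`), writing `Xop = (B|A)~`,
`Yop = (C|A)~`, one has
`(1/4)|tr(ρ[Xop,Yop])|² + [Δ_ρ(B,C|A)]² = |Cor_ρ(B,C|A)|² ≤ Δ_ρ(B|A)·Δ_ρ(C|A)`. -/
theorem uncertainty_principle_conditioned {n : ℕ} {X : Type*} [Fintype X]
    (I : X → Matrix (Fin n) (Fin n) ℂ →ₗ[ℂ] Matrix (Fin n) (Fin n) ℂ)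
    (D : X → Matrix (Fin n) (Fin n) ℂ →ₗ[ℂ] Matrix (Fin n) (Fin n) ℂ)
    (A : X → Matrix (Fin n) (Fin n) ℂ)
    (hA : ∀ x, IsEffect (A x)) (hAsum : ∑ x, A x = 1)
    (hId : ∀ x, ∀ ρ M : Matrix (Fin n) (Fin n) ℂ,
      (I x ρ * M).trace = (ρ * D x M).trace)
    (hDpos : ∀ x, ∀ M : Matrix (Fin n) (Fin n) ℂ, M.PosSemidef → (D x M).PosSemidef)
    (hmeas : ∀ x, D x 1 = A x)
    (ΩB ΩC : Finset ℝ) (B C : ℝ → Matrix (Fin n) (Fin n) ℂ)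
    (hB : ∀ y ∈ ΩB, IsEffect (B y)) (hBsum : ∑ y ∈ ΩB, B y = 1)
    (hC : ∀ z ∈ ΩC, IsEffect (C z)) (hCsum : ∑ z ∈ ΩC, C z = 1)
    (ρ : Matrix (Fin n) (Fin n) ℂ) (hρ : IsState ρ) :
    (1 / 4) * ‖(ρ * (condStoch D ΩB B * condStoch D ΩC C -
          condStoch D ΩC C * condStoch D ΩB B)).trace‖ ^ 2 +
        (corr ρ (condStoch D ΩB B) (condStoch D ΩC C)).re ^ 2 =
      ‖corr ρ (condStoch D ΩB B) (condStoch D ΩC C)‖ ^ 2 ∧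
    ‖corr ρ (condStoch D ΩB B) (condStoch D ΩC C)‖ ^ 2 ≤
      (corr ρ (condStoch D ΩB B) (condStoch D ΩB B)).re *
        (corr ρ (condStoch D ΩC C) (condStoch D ΩC C)).re :=
  uncertainty_principle_conditioned_general D hDpos ΩB ΩC B C hB hC ρ hρ
end
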